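/- arXiv:0909.2143 — 5 statements merged into one kernel-verified Lean document; each statement's English description precedes it below -/
import Mathlib

section
/- Let X be a simplicial set, y a q-simplex of X, α : [p] → [q] a surjective morphism in the simplex category, and x = X(α)(y). Then the number of indices i with 0 ≤ i ≤ p−1 such that the elementary edge X(φ(i,i+1))(x) is non-degenerate is at most q, where φ(i,i+1) : [1] → [p] is the morphism sending 0 ↦ i and 1 ↦ i+1. -/
open CategoryTheory Simplicial MonoidalCategory SSet Limits

universe u v

/-- A simplex is degenerate if it is the image of a degeneracy map. -/
def SDeg (X : SSet.{u}) : ∀ {n : ℕ}, X _⦋n⦌ → Prop := fun {n} x =>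
  match n, x with
  | 0, _ => False
  | n + 1, x => ∃ (i : Fin (n + 1)) (y : X _⦋n⦌), x = X.map (SimplexCategory.σ i).op y

/-- The `i`-th elementary edge `X(φ(i,i+1))(x)` of a `p`-simplex `x`. -/
def elemEdge (X : SSet.{u}) {p : ℕ} (x : X _⦋p⦌) (i : Fin p) : X _⦋1⦌ :=
  X.map (SimplexCategory.mkOfLe i.castSucc i.succ (Fin.castSucc_lt_succ (i := i)).le).op x

/-- A simplicial set is regular (property `P_1`) if any simplex with a degenerate
`i`-th elementary edge is an `i`-th degeneracy. -/
def SReg (X : SSet.{u}) : Prop :=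
  ∀ (p : ℕ) (x : X _⦋p + 1⦌) (i : Fin (p + 1)),
    SDeg X (elemEdge X x i) → ∃ y : X _⦋p⦌, x = X.map (SimplexCategory.σ i).op y

/-!
Along the elementary edge from `i` to `i + 1`, the edge of `X(α)(y)` is the edge of `y` from
`α i` to `α (i + 1)`, which is degenerate when `α` does not increase there. So every
non-degenerate elementary edge marks a strict ascent of the monotone map `[p] → [q]`, and such a
map has at most `q` ascents.
-/

theorem Monotone.card_ascents_le {p q : ℕ} {f : Fin (p + 1) → Fin (q + 1)} (hf : Monotone f) :
    Nat.card {i : Fin p // f i.castSucc < f i.succ} ≤ q := by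
  have hsucc_ne_zero (i : {i : Fin p // f i.castSucc < f i.succ}) : f i.1.succ ≠ 0 :=
    (Fin.zero_le _ |>.trans_lt i.2).ne'
  have hmono : StrictMono fun i : {i : Fin p // f i.castSucc < f i.succ} ↦
      (f i.1.succ).pred (hsucc_ne_zero i) := by
    intro i j hij
    rw [Fin.pred_lt_pred_iff]
    exact (hf (Fin.succ_le_castSucc_iff.mpr hij)).trans_lt j.2
  calc Nat.card {i : Fin p // f i.castSucc < f i.succ}
      ≤ Nat.card (Fin q) := Nat.card_le_card_of_injective _ hmono.injective
    _ = q := Nat.card_eq_fintype_card.trans (Fintype.card_fin q)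

theorem SDeg.elemEdge_map_of_eq (X : SSet.{u}) {p q : ℕ} (α : (⦋p⦌ : SimplexCategory) ⟶ ⦋q⦌)
    (y : X _⦋q⦌) {i : Fin p} (h : α.toOrderHom i.castSucc = α.toOrderHom i.succ) :
    SDeg X (elemEdge X (X.map α.op y) i) := by
  have hcomp : SimplexCategory.mkOfLe i.castSucc i.succ (Fin.castSucc_lt_succ (i := i)).le ≫ α =
      SimplexCategory.σ 0 ≫ SimplexCategory.const ⦋0⦌ ⦋q⦌ (α.toOrderHom i.castSucc) := by
    ext j
    fin_cases j <;> simp [SimplexCategory.mkOfLe, SimplexCategory.σ]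
    exacts [rfl, congrArg Fin.val h.symm]
  refine ⟨0, X.map (SimplexCategory.const ⦋0⦌ ⦋q⦌ (α.toOrderHom i.castSucc)).op y, ?_⟩
  rw [elemEdge, ← Functor.map_comp_apply, ← op_comp, hcomp, op_comp,
    Functor.map_comp_apply]

theorem stmt_0_general (X : SSet.{u}) (p q : ℕ) (α : (⦋p⦌ : SimplexCategory) ⟶ ⦋q⦌)
    (y : X _⦋q⦌) (x : X _⦋p⦌)
    (hx : x = X.map α.op y) :
    Nat.card {i : Fin p // ¬ SDeg X (elemEdge X x i)} ≤ q := by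
  subst hx
  have hascent (i : Fin p) (hi : ¬ SDeg X (elemEdge X (X.map α.op y) i)) :
      α.toOrderHom i.castSucc < α.toOrderHom i.succ :=
    (α.toOrderHom.monotone Fin.castSucc_lt_succ.le).lt_of_ne
      fun h ↦ hi (SDeg.elemEdge_map_of_eq X α y h)
  calc Nat.card {i : Fin p // ¬ SDeg X (elemEdge X (X.map α.op y) i)}
      ≤ Nat.card {i : Fin p // α.toOrderHom i.castSucc < α.toOrderHom i.succ} :=
        Nat.card_le_card_of_injective (Subtype.map id hascent)
          (Subtype.map_injective _ Function.injective_id)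
    _ ≤ q := α.toOrderHom.monotone.card_ascents_le

/-- If `x = X(α)(y)` for a surjection `α : [p] ⟶ [q]`, then at most `q` of the
elementary edges of `x` are non-degenerate. -/
theorem stmt_0 (X : SSet.{u}) (p q : ℕ) (α : (⦋p⦌ : SimplexCategory) ⟶ ⦋q⦌)
    (hα : Function.Surjective α.toOrderHom) (y : X _⦋q⦌) (x : X _⦋p⦌)
    (hx : x = X.map α.op y) :
    Nat.card {i : Fin p // ¬ SDeg X (elemEdge X x i)} ≤ q :=
  stmt_0_general X p q α y x hx
end

section
/- Every strongly regular simplicial set satisfies property P_r for every r > 0. In particular, every strongly regular simplicial set is regular. -/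
open CategoryTheory Simplicial MonoidalCategory SSet Limits

universe u v

/-- A simplicial set is strongly regular if all faces of non-degenerate simplices
are non-degenerate. -/
def SStrongReg (X : SSet.{u}) : Prop :=
  ∀ (p : ℕ) (x : X _⦋p + 1⦌), ¬ SDeg X x →
    ∀ i : Fin (p + 2), ¬ SDeg X (X.map (SimplexCategory.δ i).op x)

/-- The morphism `σ_i ∘ σ_{i+1} ∘ ⋯ ∘ σ_{i+r-1} : [m+r] ⟶ [m]` of the simplex category,
collapsing `{i, …, i+r}` to `i` (for `i ≤ m`). -/
def collapseHom (m i r : ℕ) : (⦋m + r⦌ : SimplexCategory) ⟶ ⦋m⦌ :=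
  SimplexCategory.mkHom
    ⟨fun j => ⟨max (j.1 - r) (min j.1 (min i m)), by have := j.2; omega⟩,
     fun a b h => by
       have h' : (a : ℕ) ≤ b := h
       simp only [Fin.mk_le_mk]; omega⟩

/-- Property `P_r`: if the edge `X(φ(i,i+r))(x)` is degenerate then
`x = s_{i+r-1} ⋯ s_i y` for some `y`. -/
def SPropR (X : SSet.{u}) (r : ℕ) : Prop :=
  ∀ (m i : ℕ) (_hi : i ≤ m) (x : X _⦋m + r⦌),
    SDeg X (X.map (SimplexCategory.mkOfLe (⟨i, by omega⟩ : Fin (m + r + 1)) ⟨i + r, by omega⟩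
      (Fin.mk_le_mk.mpr (by omega))).op x) →
    ∃ y : X _⦋m⦌, x = X.map (collapseHom m i r).op y

/-! A simplex `x` is `α^* y` for an epimorphism `α : [m + r] → [k]` and a non-degenerate `y`
(Eilenberg–Zilber). The edge of `x` from `i` to `i + r` is then `(α ∘ φ(i, i + r))^* y`. If
`α i ≠ α (i + r)` this composite is injective, hence a composite of face maps, and strong
regularity makes the edge non-degenerate. So `α` is constant on `{i, …, i + r}` and factors
through the collapse `[m + r] → [m]`. -/

namespace SimplexCategory

lemma mono_mkOfLe_comp {n : ℕ} {Δ : SimplexCategory} (a b : Fin (n + 1)) (h : a ≤ b)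
    (α : ⦋n⦌ ⟶ Δ) (hab : α.toOrderHom a ≠ α.toOrderHom b) : Mono (mkOfLe a b h ≫ α) := by
  rw [mono_iff_injective]
  intro x y hxy
  fin_cases x <;> fin_cases y
  exacts [rfl, (hab hxy).elim, (hab hxy.symm).elim, rfl]

def collapseSection (m i r : ℕ) : (⦋m⦌ : SimplexCategory) ⟶ ⦋m + r⦌ :=
  mkHom
    ⟨fun j => ⟨if j.1 ≤ i then j.1 else j.1 + r, by have := j.2; split <;> omega⟩,
     fun a b h => by
       have h' : (a : ℕ) ≤ b := h
       simp only [Fin.mk_le_mk]; split <;> split <;> omega⟩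

lemma collapseHom_comp_collapseSection_apply {m i r : ℕ} (hi : i ≤ m) (j : Fin (m + r + 1)) :
    ((collapseHom m i r ≫ collapseSection m i r).toOrderHom j : ℕ) =
      if i < j ∧ j.1 ≤ i + r then i else j := by
  change (if max (j.1 - r) (min j.1 (min i m)) ≤ i then max (j.1 - r) (min j.1 (min i m))
    else max (j.1 - r) (min j.1 (min i m)) + r) = _
  split_ifs <;> omega

lemma collapseHom_comp_collapseSection_comp {m i r : ℕ} {Δ : SimplexCategory} (hi : i ≤ m)
    (α : ⦋m + r⦌ ⟶ Δ)
    (hα : α.toOrderHom ⟨i, by rw [len_mk]; omega⟩ = α.toOrderHom ⟨i + r, by rw [len_mk]; omega⟩) :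
    collapseHom m i r ≫ collapseSection m i r ≫ α = α := by
  ext j : 3
  rw [← Category.assoc, comp_toOrderHom, OrderHom.comp_coe, Function.comp_apply]
  have hj := collapseHom_comp_collapseSection_apply hi j
  split_ifs at hj with hij
  · obtain ⟨hij, hjr⟩ := hij
    have hj' : (collapseHom m i r ≫ collapseSection m i r).toOrderHom j = ⟨i, by omega⟩ :=
      Fin.ext hj
    rw [hj']
    refine le_antisymm (α.toOrderHom.monotone (Fin.mk_le_mk.mpr hij.le)) ?_
    rw [hα]
    exact α.toOrderHom.monotone (Fin.mk_le_mk.mpr hjr)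
  · exact congrArg α.toOrderHom (Fin.ext hj)

lemma collapseHom_one (p : ℕ) (i : Fin (p + 1)) : collapseHom p i 1 = σ i := by
  ext j : 3
  rw [Fin.ext_iff]
  change max (j.1 - 1) (min j.1 (min i.1 p)) = (i.predAbove j : ℕ)
  rw [Fin.predAbove]
  split_ifs with h <;> simp only [Fin.lt_def, Fin.val_castSucc] at h
  · rw [Fin.val_pred]; omega
  · rw [Fin.coe_castPred]; omega

end SimplexCategory

section

variable {X : SSet.{u}}

lemma sDeg_iff_mem_degenerate {n : ℕ} (x : X _⦋n⦌) : SDeg X x ↔ x ∈ X.degenerate n := by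
  cases n with
  | zero => simp [SDeg]
  | succ n =>
    simp only [degenerate_eq_iUnion_range_σ, Set.mem_iUnion, Set.mem_range, SDeg]
    exact exists_congr fun i => ⟨fun ⟨y, hy⟩ => ⟨y, hy.symm⟩, fun ⟨y, hy⟩ => ⟨y, hy.symm⟩⟩

lemma SStrongReg.map_δ_mem_nonDegenerate (hX : SStrongReg X) {n : ℕ} {x : X _⦋n + 1⦌}
    (hx : x ∈ X.nonDegenerate (n + 1)) (i : Fin (n + 2)) :
    X.map (SimplexCategory.δ i).op x ∈ X.nonDegenerate n := by
  have := hX n x ((sDeg_iff_mem_degenerate x).not.mpr hx) i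
  rwa [sDeg_iff_mem_degenerate] at this

lemma SStrongReg.map_mem_nonDegenerate (hX : SStrongReg X) {n k : ℕ} (f : ⦋k⦌ ⟶ ⦋n⦌) [Mono f]
    {y : X _⦋n⦌} (hy : y ∈ X.nonDegenerate n) : X.map f.op y ∈ X.nonDegenerate k := by
  induction n generalizing k with
  | zero =>
    obtain rfl : k = 0 := Nat.le_zero.mp (SimplexCategory.len_le_of_mono f)
    rwa [SimplexCategory.eq_id_of_mono f, op_id, Functor.map_id_apply]
  | succ n ih =>
    by_cases hf : Function.Surjective f.toOrderHom
    · have : Epi f := SimplexCategory.epi_iff_surjective.mpr hf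
      obtain rfl : k = n + 1 :=
        (SimplexCategory.len_le_of_mono f).antisymm (SimplexCategory.len_le_of_epi f)
      rwa [SimplexCategory.eq_id_of_mono f, op_id, Functor.map_id_apply]
    · obtain ⟨i, g, rfl⟩ := SimplexCategory.eq_comp_δ_of_not_surjective f hf
      have : Mono g := mono_of_mono g (SimplexCategory.δ i)
      rw [op_comp, Functor.map_comp_apply]
      exact ih g (hX.map_δ_mem_nonDegenerate hy i)

lemma SStrongReg.sPropR (hX : SStrongReg X) (r : ℕ) : SPropR X r := by
  intro m i hi x hdeg
  obtain ⟨k, α, _, y, rfl⟩ := X.exists_nonDegenerate x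
  rw [← Functor.map_comp_apply, ← op_comp, sDeg_iff_mem_degenerate] at hdeg
  have hα : α.toOrderHom ⟨i, by rw [SimplexCategory.len_mk]; omega⟩ =
      α.toOrderHom ⟨i + r, by rw [SimplexCategory.len_mk]; omega⟩ := by
    by_contra hne
    have := SimplexCategory.mono_mkOfLe_comp _ _ (Fin.mk_le_mk.mpr (by omega)) α hne
    exact hX.map_mem_nonDegenerate _ y.2 hdeg
  refine ⟨X.map (SimplexCategory.collapseSection m i r ≫ α).op y, ?_⟩
  rw [← Functor.map_comp_apply, ← op_comp,
    SimplexCategory.collapseHom_comp_collapseSection_comp hi α hα]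

lemma SStrongReg.sReg (hX : SStrongReg X) : SReg X := by
  intro p x i hdeg
  obtain ⟨y, hy⟩ := hX.sPropR 1 p i (Nat.lt_succ_iff.mp i.2) x hdeg
  exact ⟨y, by rwa [SimplexCategory.collapseHom_one] at hy⟩

end

/-- A strongly regular simplicial set satisfies `P_r` for all `r > 0`;
in particular it is regular. -/
theorem stmt_4 (X : SSet.{u}) (hX : SStrongReg X) :
    (∀ r : ℕ, 0 < r → SPropR X r) ∧ SReg X :=
  ⟨fun r _ => hX.sPropR r, hX.sReg⟩
end

section
/- If a simplicial set X satisfies both property P_1 and property P_2, then X is strongly regular, i.e. every face of every non-degenerate simplex of X is non-degenerate. -/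
open CategoryTheory Simplicial MonoidalCategory SSet Limits

universe u v

/-!
If `d_i x = s_j y`, the edge `δ_i(j) → δ_i(j+1)` of `x` is the edge `j → j+1` of `d_i x`, which
`s_j` collapses to a vertex; so it is degenerate. As `δ_i` skips at most one vertex, this edge has
length `1` or `2`, and `P_1` or `P_2` then exhibits `x` itself as a degenerate simplex.
-/

open SimplexCategory

lemma Fin.succAbove_succ_eq_add_one_or_add_two {n : ℕ} (i : Fin (n + 2)) (j : Fin n) :
    (i.succAbove j.succ : ℕ) = i.succAbove j.castSucc + 1 ∨
      (i.succAbove j.succ : ℕ) = i.succAbove j.castSucc + 2 := by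
  simp only [Fin.succAbove, Fin.lt_def, Fin.val_castSucc, Fin.val_succ]
  split_ifs <;> simp only [Fin.val_castSucc, Fin.val_succ, true_or, or_true]
  omega

namespace SimplexCategory

lemma mkOfLe_comp {n m : ℕ} {a b : Fin (n + 1)} (h : a ≤ b) (f : ⦋n⦌ ⟶ ⦋m⦌) :
    mkOfLe a b h ≫ f = mkOfLe (f.toOrderHom a) (f.toOrderHom b) (f.toOrderHom.monotone h) :=
  Hom.ext_one_left _ _

lemma mkOfLe_castSucc_succ_comp_σ {n : ℕ} (j : Fin (n + 1)) :
    mkOfLe j.castSucc j.succ (Fin.castSucc_le_succ j) ≫ σ j = mkOfLe j j le_rfl := by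
  rw [mkOfLe_comp]
  exact Hom.ext_one_left _ _ (Fin.predAbove_castSucc_self j) (Fin.predAbove_succ_self j)

end SimplexCategory

lemma collapseHom_succ {m i : ℕ} (hi : i ≤ m) (r : ℕ) :
    collapseHom m i (r + 1) = σ (⟨i, by omega⟩ : Fin (m + r + 1)) ≫ collapseHom m i r := by
  ext j : 4
  change max (j.1 - (r + 1)) (min j.1 (min i m)) =
    max ((Fin.predAbove _ j : ℕ) - r) (min (Fin.predAbove _ j : ℕ) (min i m))
  simp only [Fin.predAbove, Fin.lt_def, Fin.val_castSucc]
  split_ifs <;> simp only [Fin.val_pred, Fin.coe_castPred] <;> omega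

section

variable {X : SSet.{u}}

lemma sDeg_map_mkOfLe_self {n : ℕ} (x : X _⦋n⦌) (c : Fin (n + 1)) :
    SDeg X (X.map (mkOfLe c c le_rfl).op x) := by
  refine ⟨0, X.map (SimplexCategory.const ⦋0⦌ ⦋n⦌ c).op x, ?_⟩
  rw [← Functor.map_comp_apply, ← op_comp]
  exact congrArg (fun f : ⦋1⦌ ⟶ ⦋n⦌ => X.map f.op x) (Hom.ext_one_left _ _)

lemma sDeg_map_mkOfLe_of_map_eq_map_σ {n m : ℕ} (f : ⦋n + 1⦌ ⟶ ⦋m⦌) (x : X _⦋m⦌)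
    {j : Fin (n + 1)} {y : X _⦋n⦌} (h : X.map f.op x = X.map (σ j).op y) :
    SDeg X (X.map (mkOfLe (f.toOrderHom j.castSucc) (f.toOrderHom j.succ)
      (f.toOrderHom.monotone (Fin.castSucc_le_succ j))).op x) := by
  rw [← mkOfLe_comp (Fin.castSucc_le_succ j), op_comp, Functor.map_comp_apply, h,
    ← Functor.map_comp_apply, ← op_comp, mkOfLe_castSucc_succ_comp_σ]
  exact sDeg_map_mkOfLe_self y j

lemma sDeg_map_collapseHom_succ {m i : ℕ} (hi : i ≤ m) (r : ℕ) (y : X _⦋m⦌) :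
    SDeg X (X.map (collapseHom m i (r + 1)).op y) := by
  rw [collapseHom_succ hi, op_comp, Functor.map_comp_apply]
  exact ⟨_, _, rfl⟩

lemma SPropR.not_sDeg_map_mkOfLe {r : ℕ} (hP : SPropR X (r + 1)) {n : ℕ} {x : X _⦋n⦌}
    (hx : ¬ SDeg X x) {a b : Fin (n + 1)} (hab : a ≤ b) (hlen : (b : ℕ) = a + (r + 1)) :
    ¬ SDeg X (X.map (mkOfLe a b hab).op x) := by
  obtain ⟨m, rfl⟩ : ∃ m, n = m + (r + 1) := ⟨n - (r + 1), by omega⟩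
  obtain ⟨a, ha⟩ := a
  obtain ⟨b, hb⟩ := b
  simp only at hlen
  subst hlen
  intro hedge
  obtain ⟨y, rfl⟩ := hP m a (by omega) x hedge
  exact hx (sDeg_map_collapseHom_succ (by omega) r y)

end

/-- A simplicial set satisfying `P_1` and `P_2` is strongly regular. -/
theorem stmt_5 (X : SSet.{u}) (h1 : SPropR X 1) (h2 : SPropR X 2) :
    SStrongReg X := by
  intro p x hx i hface
  cases p with
  | zero => exact hface
  | succ q =>
    obtain ⟨j, y, hy⟩ := hface
    have hedge := sDeg_map_mkOfLe_of_map_eq_map_σ (δ i) x hy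
    rcases Fin.succAbove_succ_eq_add_one_or_add_two i j with hlen | hlen
    · exact h1.not_sDeg_map_mkOfLe (r := 0) hx _ hlen hedge
    · exact h2.not_sDeg_map_mkOfLe (r := 1) hx _ hlen hedge
end

section
/- For a simplicial set X, the following are equivalent: (i) X is regular (satisfies P_1); (ii) every elementary edge of every non-degenerate simplex of X is non-degenerate; (iii) a simplex x of X is non-degenerate if and only if all of its elementary edges are non-degenerate. -/
open CategoryTheory Simplicial MonoidalCategory SSet Limits

universe u v

/-! If every elementary edge of a non-degenerate simplex is non-degenerate, regularity follows by
induction on the dimension. A simplex `x` with a degenerate `i`-th edge is then degenerate, say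
`x = s_j y`. For `i ≠ j` the `i`-th edge of `x` is an elementary edge `i'` of `y`, so `y = s_{i'} z`
by induction, and `s_j s_{i'}` identifies the vertices `i` and `i + 1`, hence factors through `s_i`.
Conversely, the `j`-th edge of `s_j y` is constant, so a degenerate simplex has a degenerate
elementary edge. -/

lemma Fin.exists_predAbove_castSucc_succ_of_ne {n : ℕ} {i j : Fin (n + 1)} (h : i ≠ j) :
    ∃ i' : Fin n, j.predAbove i.castSucc = i'.castSucc ∧ j.predAbove i.succ = i'.succ := by
  rcases h.lt_or_gt with h | h
  · refine ⟨i.castPred (Fin.ne_last_of_lt h), ?_, ?_⟩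
    · rw [Fin.predAbove_castSucc_of_le _ _ h.le, Fin.castSucc_castPred]
    · rw [Fin.predAbove_succ_of_lt _ _ h]; rfl
  · refine ⟨i.pred (Fin.ne_zero_of_lt h), ?_, ?_⟩
    · rw [Fin.predAbove_castSucc_of_lt _ _ h]; rfl
    · rw [Fin.predAbove_succ_of_le _ _ h.le, Fin.succ_pred]

namespace SSet

open SimplexCategory

variable {X : SSet.{u}}

lemma exists_eq_map_σ_of_apply_eq {n m : ℕ} (f : ⦋n + 1⦌ ⟶ ⦋m⦌) (i : Fin (n + 1))
    (hi : f.toOrderHom i.castSucc = f.toOrderHom i.succ) (y : X _⦋m⦌) :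
    ∃ z : X _⦋n⦌, X.map f.op y = X.map (σ i).op z := by
  obtain ⟨g, rfl⟩ := eq_σ_comp_of_not_injective' f i hi
  exact ⟨X.map g.op y, by simp⟩

lemma elemEdge_map {n m : ℕ} (f : ⦋n⦌ ⟶ ⦋m⦌) (y : X _⦋m⦌) (i : Fin n) :
    elemEdge X (X.map f.op y) i =
      X.map (mkOfLe i.castSucc i.succ (Fin.castSucc_lt_succ (i := i)).le ≫ f).op y := by
  simp [elemEdge]

lemma sDeg_elemEdge_map_σ_self {n : ℕ} (y : X _⦋n⦌) (j : Fin (n + 1)) :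
    SDeg X (elemEdge X (X.map (σ j).op y) j) := by
  rw [elemEdge_map]
  obtain ⟨z, hz⟩ := exists_eq_map_σ_of_apply_eq
    (mkOfLe j.castSucc j.succ (Fin.castSucc_lt_succ (i := j)).le ≫ σ j) 0
    (Fin.predAbove_castSucc_self j |>.trans (Fin.predAbove_succ_self j).symm) y
  exact ⟨0, z, hz⟩

lemma exists_sDeg_elemEdge_of_sDeg {p : ℕ} {x : X _⦋p⦌} (hx : SDeg X x) :
    ∃ i : Fin p, SDeg X (elemEdge X x i) := by
  cases p with
  | zero => exact hx.elim
  | succ n =>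
    obtain ⟨j, y, rfl⟩ := hx
    exact ⟨j, sDeg_elemEdge_map_σ_self y j⟩

lemma elemEdge_map_σ_of_predAbove_eq {n : ℕ} (y : X _⦋n + 1⦌) {i j : Fin (n + 2)}
    {i' : Fin (n + 1)}
    (hc : j.predAbove i.castSucc = i'.castSucc) (hs : j.predAbove i.succ = i'.succ) :
    elemEdge X (X.map (σ j).op y) i = elemEdge X y i' := by
  have hedge : mkOfLe i.castSucc i.succ (Fin.castSucc_lt_succ (i := i)).le ≫ σ j =
      mkOfLe i'.castSucc i'.succ (Fin.castSucc_lt_succ (i := i')).le :=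
    Hom.ext_one_left _ _ hc hs
  rw [elemEdge_map, hedge, elemEdge]

lemma exists_map_σ_map_σ_eq_map_σ {n : ℕ} (z : X _⦋n⦌) {i j : Fin (n + 2)} {i' : Fin (n + 1)}
    (hc : j.predAbove i.castSucc = i'.castSucc) (hs : j.predAbove i.succ = i'.succ) :
    ∃ w : X _⦋n + 1⦌, X.map (σ j).op (X.map (σ i').op z) = X.map (σ i).op w := by
  rw [← Functor.map_comp_apply, ← op_comp]
  refine exists_eq_map_σ_of_apply_eq _ i ?_ z
  change i'.predAbove (j.predAbove i.castSucc) = i'.predAbove (j.predAbove i.succ)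
  rw [hc, hs, Fin.predAbove_castSucc_self, Fin.predAbove_succ_self]

lemma not_sDeg_elemEdge_of_sReg (hX : SReg X) {p : ℕ} {x : X _⦋p⦌} (hx : ¬ SDeg X x)
    (i : Fin p) : ¬ SDeg X (elemEdge X x i) := by
  cases p with
  | zero => exact i.elim0
  | succ n =>
    intro hi
    obtain ⟨y, hy⟩ := hX n x i hi
    exact hx ⟨i, y, hy⟩

lemma sReg_of_not_sDeg_elemEdge
    (hX : ∀ (p : ℕ) (x : X _⦋p⦌), ¬ SDeg X x → ∀ i : Fin p, ¬ SDeg X (elemEdge X x i)) :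
    SReg X := by
  have sDeg_of_sDeg_elemEdge {p : ℕ} {x : X _⦋p⦌} {i : Fin p} (hi : SDeg X (elemEdge X x i)) :
      SDeg X x := by
    by_contra hx
    exact hX p x hx i hi
  intro p
  induction p with
  | zero =>
    intro x i hi
    obtain ⟨j, y, rfl⟩ := sDeg_of_sDeg_elemEdge hi
    obtain rfl := Subsingleton.elim (α := Fin 1) i j
    exact ⟨y, rfl⟩
  | succ n ih =>
    intro x i hi
    obtain ⟨j, y, rfl⟩ := sDeg_of_sDeg_elemEdge hi
    rcases eq_or_ne i j with rfl | hij
    · exact ⟨y, rfl⟩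
    obtain ⟨i', hc, hs⟩ := Fin.exists_predAbove_castSucc_succ_of_ne hij
    rw [elemEdge_map_σ_of_predAbove_eq y hc hs] at hi
    obtain ⟨z, rfl⟩ := ih y i' hi
    exact exists_map_σ_map_σ_eq_map_σ z hc hs

end SSet

/-- Equivalent characterizations of regularity: (i) `X` is regular; (ii) all elementary
edges of non-degenerate simplices are non-degenerate; (iii) a simplex is non-degenerate
iff all its elementary edges are non-degenerate. -/
theorem stmt_6 (X : SSet.{u}) :
    (SReg X ↔
      ∀ (p : ℕ) (x : X _⦋p⦌), ¬ SDeg X x → ∀ i : Fin p, ¬ SDeg X (elemEdge X x i)) ∧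
    ((∀ (p : ℕ) (x : X _⦋p⦌), ¬ SDeg X x → ∀ i : Fin p, ¬ SDeg X (elemEdge X x i)) ↔
      ∀ (p : ℕ) (x : X _⦋p⦌), ¬ SDeg X x ↔ ∀ i : Fin p, ¬ SDeg X (elemEdge X x i)) := by
  refine ⟨⟨fun hX _ _ => not_sDeg_elemEdge_of_sReg hX, sReg_of_not_sDeg_elemEdge⟩,
    fun hX p x => ⟨hX p x, fun hedges hx => ?_⟩, fun hX p x => (hX p x).1⟩
  obtain ⟨i, hi⟩ := exists_sDeg_elemEdge_of_sDeg hx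
  exact hedges i hi
end

section
/- Let X be a regular simplicial set and let f be a p-simplex of the internal hom Hom(Δ^n, X) (i.e. a simplicial map f : Δ^p × Δ^n → X) which is k-almost degenerate for some 0 ≤ k ≤ p−1. Then there exists a (p−1)-simplex g of Hom(Δ^n, X) with f = s_k(g). In particular, every almost-degenerate simplex of Hom(Δ^n, X) is degenerate. -/
open CategoryTheory Simplicial MonoidalCategory SSet Limits

universe u v

/-- The internal hom of simplicial sets: its `p`-simplices are the
simplicial maps `Δ[p] ⊗ U ⟶ X`. -/
noncomputable def sHom (U X : SSet.{u}) : SSet.{u} where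
  obj m := SSet.stdSimplex.obj m.unop ⊗ U ⟶ X
  map φ := TypeCat.ofHom (fun f => (SSet.stdSimplex.map φ.unop ▷ U) ≫ f)
  map_id m := ConcreteCategory.hom_ext _ _ fun f => by
    simp; erw [CategoryTheory.Functor.map_id, MonoidalCategory.id_whiskerRight, Category.id_comp]
  map_comp φ ψ := ConcreteCategory.hom_ext _ _ fun f => by
    simp; erw [CategoryTheory.Functor.map_comp, MonoidalCategory.comp_whiskerRight, Category.assoc]

/-- A `p`-simplex `f : Δ[p] ⊗ Δ[n] ⟶ X` of `Hom(Δ[n], X)` is `k`-almost degenerate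
if for every `0 ≤ j ≤ n` the image under `f` of the edge from `(k, j)` to `(k+1, j)`
is a degenerate `1`-simplex of `X`. -/
def AlmostDegAt (X : SSet.{u}) (n p : ℕ) (f : Δ[p + 1] ⊗ Δ[n] ⟶ X) (k : Fin (p + 1)) : Prop :=
  ∀ j : Fin (n + 1),
    SDeg X (f.app (Opposite.op ⦋1⦌)
      ((SSet.stdSimplex.objEquiv (n := ⦋p + 1⦌) (m := Opposite.op ⦋1⦌)).symm
          (SimplexCategory.mkOfLe k.castSucc k.succ (Fin.castSucc_lt_succ (i := k)).le),
       (SSet.stdSimplex.objEquiv (n := ⦋n⦌) (m := Opposite.op ⦋1⦌)).symm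
          (SimplexCategory.const ⦋1⦌ ⦋n⦌ j)))


/-!
Write `τ = σ k ≫ δ (k + 1)`, the map `[p + 1] → [p + 1]` sending `k + 1` to `k` and fixing the
other vertices. Since `f = s_k (d_{k+1} f)` means `f (α ≫ τ, β) = f (α, β)` for every simplex
`(α, β)` of `Δ[p + 1] ⊗ Δ[n]`, it suffices to lower the vertices of `α` with value `k + 1` to `k`
one at a time, from left to right. Lowering the vertex `i` compares the faces `d_i` and `d_{i+1}`
of an `(ℓ + 1)`-simplex of the product whose `i`-th edge goes from `(k, j)` to `(k + 1, j)`.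
Almost degeneracy makes the image of that edge under `f` degenerate, so by regularity the image
of the simplex is an `i`-th degeneracy, whose `i`-th and `(i + 1)`-st faces agree.
-/

open SimplexCategory Opposite

namespace SimplexCategory

section

variable {p : ℕ} (k : Fin (p + 1))

lemma σ_comp_δ_succ_apply (j : Fin (p + 2)) :
    (σ k ≫ δ k.succ).toOrderHom j = k.succ.succAbove (k.predAbove j) :=
  rfl

lemma σ_comp_δ_succ_apply_of_ne {j : Fin (p + 2)} (hj : j ≠ k.succ) :
    (σ k ≫ δ k.succ).toOrderHom j = j := by
  rw [σ_comp_δ_succ_apply, Fin.succ_succAbove_predAbove hj]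

lemma σ_comp_δ_succ_apply_succ : (σ k ≫ δ k.succ).toOrderHom k.succ = k.castSucc := by
  rw [σ_comp_δ_succ_apply, Fin.predAbove_succ_self, Fin.succAbove_succ_self]

lemma σ_comp_δ_succ_apply_le (j : Fin (p + 2)) : (σ k ≫ δ k.succ).toOrderHom j ≤ j := by
  by_cases hj : j = k.succ
  · subst hj
    rw [σ_comp_δ_succ_apply_succ]
    exact Fin.castSucc_lt_succ.le
  · rw [σ_comp_δ_succ_apply_of_ne k hj]

end

variable {ℓ m : ℕ}

def lowerBelow (τ : ⦋m⦌ ⟶ ⦋m⦌) (hτ : ∀ x, τ.toOrderHom x ≤ x) (α : ⦋ℓ⦌ ⟶ ⦋m⦌) (t : ℕ) :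
    ⦋ℓ⦌ ⟶ ⦋m⦌ :=
  mkHom
    { toFun := fun j => if (j : ℕ) < t then τ.toOrderHom (α.toOrderHom j) else α.toOrderHom j
      monotone' := by
        intro j j' h
        dsimp only
        split_ifs with hj hj' hj'
        · exact τ.toOrderHom.monotone (α.toOrderHom.monotone h)
        · exact (hτ _).trans (α.toOrderHom.monotone h)
        · exact absurd (lt_of_le_of_lt (Fin.le_def.mp h) hj') hj
        · exact α.toOrderHom.monotone h }

variable (τ : ⦋m⦌ ⟶ ⦋m⦌) (hτ : ∀ x, τ.toOrderHom x ≤ x) (α : ⦋ℓ⦌ ⟶ ⦋m⦌)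

lemma lowerBelow_apply (t : ℕ) (j : Fin (ℓ + 1)) :
    (lowerBelow τ hτ α t).toOrderHom j =
      if (j : ℕ) < t then τ.toOrderHom (α.toOrderHom j) else α.toOrderHom j :=
  rfl

@[simp]
lemma lowerBelow_zero : lowerBelow τ hτ α 0 = α := by
  ext j : 3
  simp [lowerBelow_apply]

lemma lowerBelow_of_le {t : ℕ} (ht : ℓ + 1 ≤ t) : lowerBelow τ hτ α t = α ≫ τ := by
  ext j : 3
  have hj : (j : ℕ) < ℓ + 1 := j.isLt
  rw [lowerBelow_apply, if_pos (by omega)]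
  rfl

lemma lowerBelow_succ_of_apply_eq (i : Fin (ℓ + 1))
    (hi : τ.toOrderHom (α.toOrderHom i) = α.toOrderHom i) :
    lowerBelow τ hτ α (i + 1) = lowerBelow τ hτ α i := by
  ext j : 3
  simp only [lowerBelow_apply]
  rcases lt_trichotomy (j : ℕ) i with hj | hj | hj
  · simp [hj, hj.trans (Nat.lt_succ_self _)]
  · simp [show j = i from Fin.ext hj, hi]
  · simp [show ¬ (j : ℕ) < i + 1 by omega, show ¬ (j : ℕ) < i by omega]

lemma δ_comp_lowerBelow_σ_comp (i : Fin (ℓ + 1)) (j : Fin (ℓ + 2))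
    (hj : j = i.castSucc ∨ j = i.succ) :
    δ j ≫ lowerBelow τ hτ (σ i ≫ α) (i + 1) = lowerBelow τ hτ α j := by
  have hσ : δ j ≫ σ i = 𝟙 _ := by
    rcases hj with rfl | rfl
    exacts [δ_comp_σ_self, δ_comp_σ_succ]
  ext e : 3
  have hσe : (σ i).toOrderHom ((δ j).toOrderHom e) = e := congr_toOrderHom_apply hσ e
  have hlt : ((δ j).toOrderHom e : ℕ) < i + 1 ↔ (e : ℕ) < j := by
    change ((j.succAbove e : Fin _) : ℕ) < _ ↔ _
    unfold Fin.succAbove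
    rcases hj with rfl | rfl <;> split_ifs with h <;>
      simp only [Fin.lt_def, Fin.val_castSucc, Fin.val_succ] at h ⊢ <;> omega
  simp only [comp_toOrderHom, OrderHom.comp_coe, Function.comp_apply, lowerBelow_apply, hσe, hlt]

lemma mkOfLe_comp_lowerBelow_σ_comp (i : Fin (ℓ + 1)) :
    mkOfLe i.castSucc i.succ Fin.castSucc_lt_succ.le ≫ lowerBelow τ hτ (σ i ≫ α) (i + 1) =
      mkOfLe (τ.toOrderHom (α.toOrderHom i)) (α.toOrderHom i) (hτ _) := by
  refine Hom.ext_one_left _ _ ?_ ?_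
  · change (if (i : ℕ) < i + 1 then τ.toOrderHom (α.toOrderHom (i.predAbove i.castSucc)) else _) = _
    simp only [Nat.lt_succ_self, if_true, Fin.predAbove_castSucc_self]
    rfl
  · change (if (i : ℕ) + 1 < i + 1 then _ else α.toOrderHom (i.predAbove i.succ)) = _
    simp only [lt_irrefl, if_false, Fin.predAbove_succ_self]
    rfl

lemma mkOfLe_comp_σ_comp {n : ℕ} (i : Fin (ℓ + 1)) (β : ⦋ℓ⦌ ⟶ ⦋n⦌) :
    mkOfLe i.castSucc i.succ Fin.castSucc_lt_succ.le ≫ σ i ≫ β =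
      const ⦋1⦌ ⦋n⦌ (β.toOrderHom i) := by
  refine Hom.ext_one_left _ _ ?_ ?_
  · exact congr_arg β.toOrderHom (Fin.predAbove_castSucc_self i)
  · exact congr_arg β.toOrderHom (Fin.predAbove_succ_self i)

end SimplexCategory

lemma SReg.map_δ_castSucc_eq_map_δ_succ {X : SSet.{u}} (hX : SReg X) {ℓ : ℕ} (x : X _⦋ℓ + 1⦌)
    (i : Fin (ℓ + 1)) (hx : SDeg X (elemEdge X x i)) :
    X.map (δ i.castSucc).op x = X.map (δ i.succ).op x := by
  obtain ⟨y, rfl⟩ := hX ℓ x i hx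
  simp only [← Functor.map_comp_apply, ← op_comp, δ_comp_σ_self, δ_comp_σ_succ]

namespace SSet

variable {X : SSet.{u}} {a b : ℕ}

def evalProd (f : Δ[a] ⊗ Δ[b] ⟶ X) {ℓ : ℕ} (α : ⦋ℓ⦌ ⟶ ⦋a⦌) (β : ⦋ℓ⦌ ⟶ ⦋b⦌) : X _⦋ℓ⦌ :=
  f.app (op ⦋ℓ⦌) (stdSimplex.objEquiv.symm α, stdSimplex.objEquiv.symm β)

lemma map_evalProd (f : Δ[a] ⊗ Δ[b] ⟶ X) {ℓ ℓ' : ℕ} (φ : ⦋ℓ'⦌ ⟶ ⦋ℓ⦌)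
    (α : ⦋ℓ⦌ ⟶ ⦋a⦌) (β : ⦋ℓ⦌ ⟶ ⦋b⦌) :
    X.map φ.op (evalProd f α β) = evalProd f (φ ≫ α) (φ ≫ β) :=
  (NatTrans.naturality_apply f φ.op _).symm

lemma evalProd_whiskerRight (f : Δ[a] ⊗ Δ[b] ⟶ X) {a' : ℕ} (φ : ⦋a'⦌ ⟶ ⦋a⦌)
    {ℓ : ℕ} (α : ⦋ℓ⦌ ⟶ ⦋a'⦌) (β : ⦋ℓ⦌ ⟶ ⦋b⦌) :
    evalProd ((SSet.stdSimplex.map φ ▷ Δ[b]) ≫ f) α β = evalProd f (α ≫ φ) β :=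
  rfl

lemma hom_ext_evalProd {f g : Δ[a] ⊗ Δ[b] ⟶ X}
    (h : ∀ (ℓ : ℕ) (α : ⦋ℓ⦌ ⟶ ⦋a⦌) (β : ⦋ℓ⦌ ⟶ ⦋b⦌), evalProd f α β = evalProd g α β) :
    f = g := by
  ext ⟨m⟩ x
  induction m using SimplexCategory.rec with
  | mk ℓ => exact h ℓ (stdSimplex.objEquiv x.1) (stdSimplex.objEquiv x.2)

end SSet

section AlmostDegenerate

variable {X : SSet.{u}} {n p : ℕ} {f : Δ[p + 1] ⊗ Δ[n] ⟶ X} {k : Fin (p + 1)}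

lemma AlmostDegAt.evalProd_lowerBelow_succ (hX : SReg X) (hf : AlmostDegAt X n p f k) {ℓ : ℕ}
    (α : ⦋ℓ⦌ ⟶ ⦋p + 1⦌) (β : ⦋ℓ⦌ ⟶ ⦋n⦌) (i : Fin (ℓ + 1)) :
    evalProd f (lowerBelow (σ k ≫ δ k.succ) (σ_comp_δ_succ_apply_le k) α (i + 1)) β =
      evalProd f (lowerBelow (σ k ≫ δ k.succ) (σ_comp_δ_succ_apply_le k) α i) β := by
  by_cases hαi : α.toOrderHom i = k.succ
  · -- `x` is `(α, β)` with the vertex `i` doubled, the first copy sent to `k` instead of `k + 1`.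
    set x := evalProd f
      (lowerBelow (σ k ≫ δ k.succ) (σ_comp_δ_succ_apply_le k) (σ i ≫ α) (i + 1)) (σ i ≫ β)
    have hx : SDeg X (elemEdge X x i) := by
      have hedge : elemEdge X x i = evalProd f (mkOfLe k.castSucc k.succ Fin.castSucc_lt_succ.le)
          (const ⦋1⦌ ⦋n⦌ (β.toOrderHom i)) := by
        rw [elemEdge, map_evalProd, mkOfLe_comp_lowerBelow_σ_comp, mkOfLe_comp_σ_comp]
        congr 1
        refine Hom.ext_one_left _ _ ?_ hαi
        change (σ k ≫ δ k.succ).toOrderHom (α.toOrderHom i) = k.castSucc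
        rw [hαi, σ_comp_δ_succ_apply_succ]
      exact hedge ▸ hf (β.toOrderHom i)
    have hfaces := hX.map_δ_castSucc_eq_map_δ_succ x i hx
    simp only [x, map_evalProd, ← Category.assoc, δ_comp_σ_self, δ_comp_σ_succ,
      Category.id_comp] at hfaces
    rw [δ_comp_lowerBelow_σ_comp _ _ _ _ _ (Or.inl rfl),
      δ_comp_lowerBelow_σ_comp _ _ _ _ _ (Or.inr rfl)] at hfaces
    exact hfaces.symm
  · rw [lowerBelow_succ_of_apply_eq _ _ _ i (σ_comp_δ_succ_apply_of_ne k hαi)]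

lemma AlmostDegAt.evalProd_comp_σ_comp_δ_succ (hX : SReg X) (hf : AlmostDegAt X n p f k) {ℓ : ℕ}
    (α : ⦋ℓ⦌ ⟶ ⦋p + 1⦌) (β : ⦋ℓ⦌ ⟶ ⦋n⦌) :
    evalProd f (α ≫ σ k ≫ δ k.succ) β = evalProd f α β := by
  have hlower : ∀ t ≤ ℓ + 1, evalProd f
      (lowerBelow (σ k ≫ δ k.succ) (σ_comp_δ_succ_apply_le k) α t) β = evalProd f α β := by
    intro t ht
    induction t with
    | zero => rw [lowerBelow_zero]
    | succ t ih =>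
      rw [← ih (by omega)]
      exact hf.evalProd_lowerBelow_succ hX α β ⟨t, by omega⟩
  rw [← lowerBelow_of_le _ (σ_comp_δ_succ_apply_le k) α le_rfl, hlower _ le_rfl]

lemma AlmostDegAt.exists_eq_map_σ (hX : SReg X) (hf : AlmostDegAt X n p f k) :
    ∃ g : (sHom Δ[n] X) _⦋p⦌, f = (sHom Δ[n] X).map (σ k).op g := by
  refine ⟨(sHom Δ[n] X).map (δ k.succ).op f, ?_⟩
  change f = (SSet.stdSimplex.map (σ k) ▷ Δ[n]) ≫ (SSet.stdSimplex.map (δ k.succ) ▷ Δ[n]) ≫ f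
  refine hom_ext_evalProd fun ℓ α β => ?_
  rw [evalProd_whiskerRight, evalProd_whiskerRight, Category.assoc,
    hf.evalProd_comp_σ_comp_δ_succ hX]

end AlmostDegenerate

/-- In `Hom(Δ[n], X)` with `X` regular, a `k`-almost degenerate simplex is a `k`-th
degeneracy; in particular almost degenerate simplices are degenerate. -/
theorem stmt_13 (X : SSet.{u}) (hX : SReg X) (n p : ℕ) :
    (∀ (f : (sHom Δ[n] X) _⦋p + 1⦌) (k : Fin (p + 1)), AlmostDegAt X n p f k →
      ∃ g : (sHom Δ[n] X) _⦋p⦌, f = (sHom Δ[n] X).map (SimplexCategory.σ k).op g) ∧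
    (∀ f : (sHom Δ[n] X) _⦋p + 1⦌, (∃ k, AlmostDegAt X n p f k) →
      SDeg (sHom Δ[n] X) f) :=
  ⟨fun _ _ hf => hf.exists_eq_map_σ hX,
    fun _ ⟨k, hf⟩ => ⟨k, hf.exists_eq_map_σ hX⟩⟩
end
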